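/- arXiv:2104.09421 — 5 statements merged into one kernel-verified Lean document; each statement's English description precedes it below -/
import Mathlib

section
/- Let C be a small category equipped with a functor λ : C → ℕ^k such that λ⁻¹(0) is exactly the set of invertible elements of C. Then for a, b ∈ C, aC = bC if and only if aG = bG, where G is the groupoid of invertible elements of C. -/
open CategoryTheory

universe v u

/-- A size functor on a small category `C`: a functor to `ℕ^k` whose kernel is exactly
the invertible morphisms. -/
structure SizeFunctor (C : Type u) [Category.{v} C] (k : ℕ) where
  lam : ∀ {X Y : C}, (X ⟶ Y) → (Fin k → ℕ)
  map_id : ∀ X : C, lam (𝟙 X) = 0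
  map_comp : ∀ {X Y Z : C} (f : X ⟶ Y) (g : Y ⟶ Z), lam (f ≫ g) = lam f + lam g
  zero_iff : ∀ {X Y : C} (f : X ⟶ Y), lam f = 0 ↔ IsIso f

/-- The principal right ideal `aC` generated by `a` (paper's `ax` is `x ≫ a`). -/
def rIdeal {C : Type u} [Category.{v} C] {X Y : C} (a : X ⟶ Y) : Set (Arrow C) :=
  {f | ∃ (W : C) (x : W ⟶ X), f = Arrow.mk (x ≫ a)}

/-- `aG`: the set of products `ag` with `g` invertible. -/
def rIdealG {C : Type u} [Category.{v} C] {X Y : C} (a : X ⟶ Y) : Set (Arrow C) :=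
  {f | ∃ (W : C) (g : W ⟶ X), IsIso g ∧ f = Arrow.mk (g ≫ a)}

lemma rIdeal_iso_comp {C : Type u} [Category.{v} C] {Z X Y : C} (g : Z ⟶ X) (hg : IsIso g)
    (a : X ⟶ Y) : rIdeal (g ≫ a) = rIdeal a := by
  haveI := hg
  ext f
  constructor
  · rintro ⟨W, x, rfl⟩
    exact ⟨W, x ≫ g, by simp⟩
  · rintro ⟨W, x, rfl⟩
    exact ⟨W, x ≫ inv g, by simp⟩

lemma rIdealG_iso_comp {C : Type u} [Category.{v} C] {Z X Y : C} (g : Z ⟶ X) (hg : IsIso g)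
    (a : X ⟶ Y) : rIdealG (g ≫ a) = rIdealG a := by
  haveI := hg
  ext f
  constructor
  · rintro ⟨W, x, hx, rfl⟩
    exact ⟨W, x ≫ g, inferInstance, by simp⟩
  · rintro ⟨W, x, hx, rfl⟩
    haveI := hx
    exact ⟨W, x ≫ inv g, inferInstance, by simp⟩

theorem rIdeal_eq_iff_rIdealG_eq {C : Type u} [Category.{v} C] {k : ℕ}
    (S : SizeFunctor C k) {X Y X' Y' : C} (a : X ⟶ Y) (b : X' ⟶ Y') :
    rIdeal a = rIdeal b ↔ rIdealG a = rIdealG b := by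
  constructor
  · intro h
    have ha : Arrow.mk a ∈ rIdeal b := by
      rw [← h]; exact ⟨X, 𝟙 X, by simp⟩
    obtain ⟨W, x, hx⟩ := ha
    have h1 : X = W := congrArg Comma.left hx
    subst h1
    have h2 : Y = Y' := congrArg Comma.right hx
    subst h2
    rw [Arrow.mk_inj] at hx
    have hb : Arrow.mk b ∈ rIdeal a := by
      rw [h]; exact ⟨X', 𝟙 X', by simp⟩
    obtain ⟨W', y, hy⟩ := hb
    have h3 : X' = W' := congrArg Comma.left hy
    subst h3
    rw [Arrow.mk_inj] at hy
    -- size argument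
    have e1 : S.lam a = S.lam x + S.lam b := by rw [hx, S.map_comp]
    have e2 : S.lam b = S.lam y + S.lam a := by rw [hy, S.map_comp]
    have hx0 : S.lam x = 0 := by
      funext i
      have t1 := congrFun e1 i
      have t2 := congrFun e2 i
      simp only [Pi.add_apply, Pi.zero_apply] at t1 t2 ⊢
      omega
    have hiso : IsIso x := (S.zero_iff x).mp hx0
    rw [hx, rIdealG_iso_comp x hiso]
  · intro h
    have ha : Arrow.mk a ∈ rIdealG b := by
      rw [← h]; exact ⟨X, 𝟙 X, inferInstance, by simp⟩
    obtain ⟨W, x, hiso, hx⟩ := ha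
    have h1 : X = W := congrArg Comma.left hx
    subst h1
    have h2 : Y = Y' := congrArg Comma.right hx
    subst h2
    rw [Arrow.mk_inj] at hx
    rw [hx, rIdeal_iso_comp x hiso]
end

section
/- Let C be a small category equipped with a size functor λ : C → ℕ^k. Then CaC = CbC if and only if GaG = GbG, where G is the groupoid of invertible elements of C. -/
open CategoryTheory

universe v u

/-- The two-sided ideal `CaC`: all composable products `xay`. -/
def tIdeal {C : Type u} [Category.{v} C] {X Y : C} (a : X ⟶ Y) : Set (Arrow C) :=
  {f | ∃ (W Z : C) (y : W ⟶ X) (x : Y ⟶ Z), f = Arrow.mk (y ≫ a ≫ x)}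

/-- `GaG`: all composable products `gah` with `g, h` invertible. -/
def tIdealG {C : Type u} [Category.{v} C] {X Y : C} (a : X ⟶ Y) : Set (Arrow C) :=
  {f | ∃ (W Z : C) (h : W ⟶ X) (g : Y ⟶ Z), IsIso h ∧ IsIso g ∧ f = Arrow.mk (h ≫ a ≫ g)}

/-- If `Arrow.mk a` lies in `tIdeal b`, we can write `a = y ≫ b ≫ x` on the nose. -/
lemma extract_tIdeal {C : Type u} [Category.{v} C] {X Y X' Y' : C} {a : X ⟶ Y} {b : X' ⟶ Y'}
    (h : Arrow.mk a ∈ tIdeal b) : ∃ (y : X ⟶ X') (x : Y' ⟶ Y), a = y ≫ b ≫ x := by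
  obtain ⟨W, Z, y, x, e⟩ := h
  obtain rfl : X = W := congrArg Comma.left e
  obtain rfl : Y = Z := congrArg Comma.right e
  exact ⟨y, x, Arrow.mk_injective _ _ e⟩

lemma extract_tIdealG {C : Type u} [Category.{v} C] {X Y X' Y' : C} {a : X ⟶ Y} {b : X' ⟶ Y'}
    (h : Arrow.mk a ∈ tIdealG b) :
    ∃ (y : X ⟶ X') (x : Y' ⟶ Y), IsIso y ∧ IsIso x ∧ a = y ≫ b ≫ x := by
  obtain ⟨W, Z, y, x, hy, hx, e⟩ := h
  obtain rfl : X = W := congrArg Comma.left e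
  obtain rfl : Y = Z := congrArg Comma.right e
  exact ⟨y, x, hy, hx, Arrow.mk_injective _ _ e⟩

/-- If `a = y ≫ b ≫ x` with `y, x` isos and symmetrically, ideals coincide one way. -/
lemma tIdealG_subset {C : Type u} [Category.{v} C] {X Y X' Y' : C} {a : X ⟶ Y} {b : X' ⟶ Y'}
    (y : X ⟶ X') (x : Y' ⟶ Y) (hy : IsIso y) (hx : IsIso x) (hab : a = y ≫ b ≫ x) :
    tIdealG a ⊆ tIdealG b := by
  rintro f ⟨W, Z, h, g, hh, hg, rfl⟩
  refine ⟨W, Z, h ≫ y, x ≫ g, inferInstance, inferInstance, ?_⟩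
  simp [hab]

lemma tIdeal_subset {C : Type u} [Category.{v} C] {X Y X' Y' : C} {a : X ⟶ Y} {b : X' ⟶ Y'}
    (y : X ⟶ X') (x : Y' ⟶ Y) (hab : a = y ≫ b ≫ x) :
    tIdeal a ⊆ tIdeal b := by
  rintro f ⟨W, Z, h, g, rfl⟩
  exact ⟨W, Z, h ≫ y, x ≫ g, by simp [hab]⟩

theorem tIdeal_eq_iff_tIdealG_eq {C : Type u} [Category.{v} C] {k : ℕ}
    (S : SizeFunctor C k) {X Y X' Y' : C} (a : X ⟶ Y) (b : X' ⟶ Y') :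
    tIdeal a = tIdeal b ↔ tIdealG a = tIdealG b := by
  constructor
  · intro h
    have ha : Arrow.mk a ∈ tIdeal b := by
      rw [← h]; exact ⟨X, Y, 𝟙 X, 𝟙 Y, by simp⟩
    have hb : Arrow.mk b ∈ tIdeal a := by
      rw [h]; exact ⟨X', Y', 𝟙 X', 𝟙 Y', by simp⟩
    obtain ⟨y, x, hab⟩ := extract_tIdeal ha
    obtain ⟨y', x', hba⟩ := extract_tIdeal hb
    -- a = y ≫ (y' ≫ a ≫ x') ≫ x ; apply λ
    have key : S.lam a = (S.lam y + S.lam y') + S.lam a + (S.lam x' + S.lam x) := by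
      conv_lhs => rw [hab, hba]
      simp only [S.map_comp]
      abel
    have hz : (S.lam y + S.lam y') + (S.lam x' + S.lam x) = 0 := by
      have := key
      funext i
      have hi := congrFun key i
      simp only [Pi.add_apply, Pi.zero_apply] at hi ⊢
      omega
    have hy : S.lam y = 0 := by funext i; have := congrFun hz i; simp only [Pi.add_apply, Pi.zero_apply] at this ⊢; omega
    have hy' : S.lam y' = 0 := by funext i; have := congrFun hz i; simp only [Pi.add_apply, Pi.zero_apply] at this ⊢; omega
    have hx : S.lam x = 0 := by funext i; have := congrFun hz i; simp only [Pi.add_apply, Pi.zero_apply] at this ⊢; omega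
    have hx' : S.lam x' = 0 := by funext i; have := congrFun hz i; simp only [Pi.add_apply, Pi.zero_apply] at this ⊢; omega
    exact le_antisymm
      (tIdealG_subset y x ((S.zero_iff y).1 hy) ((S.zero_iff x).1 hx) hab)
      (tIdealG_subset y' x' ((S.zero_iff y').1 hy') ((S.zero_iff x').1 hx') hba)
  · intro h
    have ha : Arrow.mk a ∈ tIdealG b := by
      rw [← h]; exact ⟨X, Y, 𝟙 X, 𝟙 Y, inferInstance, inferInstance, by simp⟩
    have hb : Arrow.mk b ∈ tIdealG a := by
      rw [h]; exact ⟨X', Y', 𝟙 X', 𝟙 Y', inferInstance, inferInstance, by simp⟩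
    obtain ⟨y, x, _, _, hab⟩ := extract_tIdealG ha
    obtain ⟨y', x', _, _, hba⟩ := extract_tIdealG hb
    exact le_antisymm (tIdeal_subset y x hab) (tIdeal_subset y' x' hba)
end

section
/- Let C be a generalized higher rank k-graph with size functor λ : C → ℕ^k. Then a ∈ C is an atom if and only if λ(a) = eᵢ for some i, where eᵢ is the i-th standard basis vector of ℕ^k. -/
open CategoryTheory

universe v u

/-- An atom: a noninvertible morphism `a` such that whenever `a = bc`
(i.e. `a = c ≫ b`), either `b` or `c` is invertible. -/
def IsAtomMor {C : Type u} [Category.{v} C] {X Y : C} (a : X ⟶ Y) : Prop :=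
  ¬ IsIso a ∧ ∀ ⦃W : C⦄ (c : X ⟶ W) (b : W ⟶ Y), a = c ≫ b → IsIso b ∨ IsIso c

/-- The Weak Factorization Property for a size functor. -/
def HasWFP {C : Type u} [Category.{v} C] {k : ℕ} (S : SizeFunctor C k) : Prop :=
  ∀ ⦃X Y : C⦄ (a : X ⟶ Y) (m n : Fin k → ℕ), S.lam a = m + n →
    ∃ (W : C) (a₂ : X ⟶ W) (a₁ : W ⟶ Y),
      a = a₂ ≫ a₁ ∧ S.lam a₁ = m ∧ S.lam a₂ = n ∧
      ∀ ⦃W' : C⦄ (b₂ : X ⟶ W') (b₁ : W' ⟶ Y),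
        a = b₂ ≫ b₁ → S.lam b₁ = m → S.lam b₂ = n →
        ∃ g : W' ⟶ W, IsIso g ∧ b₁ = g ≫ a₁ ∧ b₂ ≫ g = a₂

theorem isAtomMor_iff_lam_eq_single {C : Type u} [Category.{v} C] {k : ℕ}
    (S : SizeFunctor C k) (hW : HasWFP S) {X Y : C} (a : X ⟶ Y) :
    IsAtomMor a ↔ ∃ i : Fin k, S.lam a = Pi.single i 1 := by
  constructor
  · rintro ⟨hni, hfac⟩
    have hne : S.lam a ≠ 0 := fun h => hni ((S.zero_iff a).mp h)
    obtain ⟨i, hi⟩ : ∃ i, S.lam a i ≠ 0 := by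
      by_contra h; push_neg at h; exact hne (funext h)
    have hi1 : 1 ≤ S.lam a i := Nat.one_le_iff_ne_zero.mpr hi
    have hdecomp : S.lam a = Pi.single i 1 + fun j => S.lam a j - (Pi.single i 1 : Fin k → ℕ) j := by
      funext j
      by_cases hj : j = i
      · subst hj; simp only [Pi.add_apply, Pi.single_eq_same]; omega
      · simp [Pi.single_eq_of_ne hj]
    obtain ⟨W, a₂, a₁, heq, h1, h2, -⟩ := hW a (Pi.single i 1) _ hdecomp
    refine ⟨i, ?_⟩
    rcases hfac a₂ a₁ heq with hb | hc
    · exfalso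
      have hz := (S.zero_iff a₁).mpr hb
      rw [hz] at h1
      have := congrFun h1 i
      simp [Pi.single_eq_same] at this
    · have hz := (S.zero_iff a₂).mpr hc
      rw [heq, S.map_comp, hz, h1]; simp
  · rintro ⟨i, hi⟩
    constructor
    · intro h
      have h0 := (S.zero_iff a).mpr h
      rw [hi] at h0
      have := congrFun h0 i
      simp [Pi.single_eq_same] at this
    · intro W c b heq
      have hsum : S.lam c + S.lam b = Pi.single i 1 := by rw [← S.map_comp, ← heq, hi]
      by_cases hb : S.lam b i = 0
      · left
        apply (S.zero_iff b).mp
        funext j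
        have hj' := congrFun hsum j
        simp only [Pi.add_apply, Pi.zero_apply] at hj' ⊢
        by_cases hj : j = i
        · subst hj; exact hb
        · rw [Pi.single_eq_of_ne hj] at hj'; omega
      · right
        apply (S.zero_iff c).mp
        funext j
        have hj' := congrFun hsum j
        simp only [Pi.add_apply, Pi.zero_apply] at hj' ⊢
        by_cases hj : j = i
        · subst hj; rw [Pi.single_eq_same] at hj'; omega
        · rw [Pi.single_eq_of_ne hj] at hj'; omega
end

section
/- Let C be a category with groupoid of invertibles G and a wide subcategory 𝒳 such that every element of C is uniquely a product xg with x ∈ 𝒳 and g ∈ G. Then for g ∈ G and x ∈ 𝒳 with gx defined, writing gx = (g·x)(g|ₓ) for the unique factorization, the resulting maps (g,x) ↦ g·x and (g,x) ↦ g|ₓ satisfy the Zappa-Szép axioms (C1)-(C3) and (SS1)-(SS8), and C is isomorphic to 𝒳 ⋈ G. -/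
open CategoryTheory

universe v u

/-- If `C` is a category whose every morphism factors uniquely as `xg` (i.e. `g ≫ x`)
with `x` in a wide subcategory `P` and `g` invertible, then the maps `(g, x) ↦ g · x`
and `(g, x) ↦ g|ₓ` obtained from the unique factorization of `gx` (i.e. `x ≫ g`)
satisfy the Zappa–Szép axioms (C1)–(C3) (encoded in the typing of `act` and `res`)
and (SS1)–(SS8), and `C` is isomorphic to `𝒳 ⋈ G` (the factorization pairs multiply
by the Zappa–Szép rule). -/
theorem zappa_szep_of_unique_factorization {C : Type u} [Category.{v} C]
    (P : MorphismProperty C)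
    (hP_id : ∀ X : C, P (𝟙 X))
    (hP_comp : ∀ ⦃X Y Z : C⦄ (f : X ⟶ Y) (g : Y ⟶ Z), P f → P g → P (f ≫ g))
    (hex : ∀ ⦃A B : C⦄ (f : A ⟶ B),
      ∃ (M : C) (g : A ⟶ M) (x : M ⟶ B), IsIso g ∧ P x ∧ f = g ≫ x)
    (huniq : ∀ ⦃A B M M' : C⦄ (g : A ⟶ M) (x : M ⟶ B) (g' : A ⟶ M') (x' : M' ⟶ B),
      IsIso g → P x → IsIso g' → P x' → g ≫ x = g' ≫ x' →
      M = M' ∧ HEq g g' ∧ HEq x x') :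
    ∃ (o : ∀ {a b c : C}, (b ⟶ c) → (a ⟶ b) → C)
      (act : ∀ {a b c : C} (g : b ⟶ c) (x : a ⟶ b), o g x ⟶ c)
      (res : ∀ {a b c : C} (g : b ⟶ c) (x : a ⟶ b), a ⟶ o g x),
      -- the unique factorization `gx = (g·x)(g|ₓ)`, i.e. `x ≫ g = res g x ≫ act g x`
      (∀ ⦃a b c : C⦄ (g : b ⟶ c) (x : a ⟶ b), IsIso g → P x →
        IsIso (res g x) ∧ P (act g x) ∧ x ≫ g = res g x ≫ act g x) ∧
      -- (SS1)
      (∀ ⦃a b : C⦄ (x : a ⟶ b), P x → HEq (act (𝟙 b) x) x) ∧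
      -- (SS2)
      (∀ ⦃a b c d : C⦄ (g : c ⟶ d) (h : b ⟶ c) (x : a ⟶ b),
        IsIso g → IsIso h → P x → HEq (act (h ≫ g) x) (act g (act h x))) ∧
      -- (SS3)
      (∀ ⦃b c : C⦄ (g : b ⟶ c), IsIso g → HEq (act g (𝟙 b)) (𝟙 c)) ∧
      -- (SS4)
      (∀ ⦃a b : C⦄ (x : a ⟶ b), P x → HEq (res (𝟙 b) x) (𝟙 a)) ∧
      -- (SS5)
      (∀ ⦃b c : C⦄ (g : b ⟶ c), IsIso g → HEq (res g (𝟙 b)) g) ∧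
      -- (SS6)
      (∀ ⦃a' a b c : C⦄ (g : b ⟶ c) (y : a' ⟶ a) (x : a ⟶ b),
        IsIso g → P y → P x → HEq (res g (y ≫ x)) (res (res g x) y)) ∧
      -- (SS7)
      (∀ ⦃a b c d : C⦄ (g : c ⟶ d) (h : b ⟶ c) (x : a ⟶ b),
        IsIso g → IsIso h → P x →
        HEq (res (h ≫ g) x) (res h x ≫ res g (act h x))) ∧
      -- (SS8)
      (∀ ⦃a' a b c : C⦄ (g : b ⟶ c) (y : a' ⟶ a) (x : a ⟶ b),
        IsIso g → P y → P x →
        HEq (act g (y ≫ x)) (act (res g x) y ≫ act g x)) ∧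
      -- `C ≅ 𝒳 ⋈ G`: the bijection `(x, g) ↦ g ≫ x` (given by `hex` and `huniq`)
      -- takes the Zappa–Szép product `(x,g)(y,h) = (x(g·y), g|_y h)` to composition
      (∀ ⦃a'' m' a m b : C⦄ (h : a'' ⟶ m') (y : m' ⟶ a) (g : a ⟶ m) (x : m ⟶ b),
        IsIso h → P y → IsIso g → P x →
        (h ≫ res g y) ≫ (act g y ≫ x) = (h ≫ y) ≫ (g ≫ x)) := by
  classical
  choose d gp xp hiso hP hfac using fun (A B : C) (f : A ⟶ B) => @hex A B f
  have key : ∀ ⦃A B M' : C⦄ (f : A ⟶ B) (g : A ⟶ M') (x : M' ⟶ B),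
      IsIso g → P x → f = g ≫ x →
      d A B f = M' ∧ HEq (gp A B f) g ∧ HEq (xp A B f) x := by
    intro A B M' f g x hg hx hfx
    exact huniq _ _ _ _ (hiso A B f) (hP A B f) hg hx ((hfac A B f).symm.trans hfx)
  refine ⟨fun {a b c} g x => d a c (x ≫ g), fun {a b c} g x => xp a c (x ≫ g),
    fun {a b c} g x => gp a c (x ≫ g), ?_, ?_, ?_, ?_, ?_, ?_, ?_, ?_, ?_, ?_⟩
  · intro a b c g x _ _
    exact ⟨hiso a c (x ≫ g), hP a c (x ≫ g), hfac a c (x ≫ g)⟩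
  · intro a b x hx
    exact (key (x ≫ 𝟙 b) (𝟙 a) x inferInstance hx (by simp)).2.2
  · intro a b c e g h x hg hh hx
    haveI := hiso a c (x ≫ h)
    haveI := hiso _ e (xp a c (x ≫ h) ≫ g)
    refine (key (x ≫ (h ≫ g)) (gp a c (x ≫ h) ≫ gp _ e (xp a c (x ≫ h) ≫ g))
      (xp _ e (xp a c (x ≫ h) ≫ g)) inferInstance (hP _ _ _) ?_).2.2
    calc x ≫ (h ≫ g) = (x ≫ h) ≫ g := by simp
      _ = (gp a c (x ≫ h) ≫ xp a c (x ≫ h)) ≫ g := by rw [← hfac]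
      _ = gp a c (x ≫ h) ≫ (xp a c (x ≫ h) ≫ g) := by simp
      _ = gp a c (x ≫ h) ≫ (gp _ e (xp a c (x ≫ h) ≫ g) ≫ xp _ e (xp a c (x ≫ h) ≫ g)) := by
          rw [← hfac]
      _ = _ := by simp
  · intro b c g hg
    exact (key (𝟙 b ≫ g) g (𝟙 c) hg (hP_id c) (by simp)).2.2
  · intro a b x hx
    exact (key (x ≫ 𝟙 b) (𝟙 a) x inferInstance hx (by simp)).2.1
  · intro b c g hg
    exact (key (𝟙 b ≫ g) g (𝟙 c) hg (hP_id c) (by simp)).2.1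
  · intro a' a b c g y x hg hy hx
    haveI := hiso a c (x ≫ g)
    haveI := hiso a' _ (y ≫ gp a c (x ≫ g))
    refine (key ((y ≫ x) ≫ g) (gp a' _ (y ≫ gp a c (x ≫ g)))
      (xp a' _ (y ≫ gp a c (x ≫ g)) ≫ xp a c (x ≫ g)) inferInstance
      (hP_comp _ _ (hP _ _ _) (hP _ _ _)) ?_).2.1
    calc (y ≫ x) ≫ g = y ≫ (x ≫ g) := by simp
      _ = y ≫ (gp a c (x ≫ g) ≫ xp a c (x ≫ g)) := by rw [← hfac]
      _ = (y ≫ gp a c (x ≫ g)) ≫ xp a c (x ≫ g) := by simp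
      _ = (gp a' _ (y ≫ gp a c (x ≫ g)) ≫ xp a' _ (y ≫ gp a c (x ≫ g))) ≫ xp a c (x ≫ g) := by
          rw [← hfac]
      _ = _ := by simp
  · intro a b c e g h x hg hh hx
    haveI := hiso a c (x ≫ h)
    haveI := hiso _ e (xp a c (x ≫ h) ≫ g)
    refine (key (x ≫ (h ≫ g)) (gp a c (x ≫ h) ≫ gp _ e (xp a c (x ≫ h) ≫ g))
      (xp _ e (xp a c (x ≫ h) ≫ g)) inferInstance (hP _ _ _) ?_).2.1
    calc x ≫ (h ≫ g) = (x ≫ h) ≫ g := by simp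
      _ = (gp a c (x ≫ h) ≫ xp a c (x ≫ h)) ≫ g := by rw [← hfac]
      _ = gp a c (x ≫ h) ≫ (xp a c (x ≫ h) ≫ g) := by simp
      _ = gp a c (x ≫ h) ≫ (gp _ e (xp a c (x ≫ h) ≫ g) ≫ xp _ e (xp a c (x ≫ h) ≫ g)) := by
          rw [← hfac]
      _ = _ := by simp
  · intro a' a b c g y x hg hy hx
    haveI := hiso a c (x ≫ g)
    haveI := hiso a' _ (y ≫ gp a c (x ≫ g))
    refine (key ((y ≫ x) ≫ g) (gp a' _ (y ≫ gp a c (x ≫ g)))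
      (xp a' _ (y ≫ gp a c (x ≫ g)) ≫ xp a c (x ≫ g)) inferInstance
      (hP_comp _ _ (hP _ _ _) (hP _ _ _)) ?_).2.2
    calc (y ≫ x) ≫ g = y ≫ (x ≫ g) := by simp
      _ = y ≫ (gp a c (x ≫ g) ≫ xp a c (x ≫ g)) := by rw [← hfac]
      _ = (y ≫ gp a c (x ≫ g)) ≫ xp a c (x ≫ g) := by simp
      _ = (gp a' _ (y ≫ gp a c (x ≫ g)) ≫ xp a' _ (y ≫ gp a c (x ≫ g))) ≫ xp a c (x ≫ g) := by
          rw [← hfac]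
      _ = _ := by simp
  · intro a'' m' a m b h y g x hh hy hg hx
    calc (h ≫ gp m' m (y ≫ g)) ≫ (xp m' m (y ≫ g) ≫ x)
        = h ≫ (gp m' m (y ≫ g) ≫ xp m' m (y ≫ g)) ≫ x := by simp
      _ = h ≫ (y ≫ g) ≫ x := by rw [← hfac]
      _ = (h ≫ y) ≫ (g ≫ x) := by simp
end

section
/- Let C be a generalized higher rank k-graph with groupoid of invertibles G, let X be a transversal of the generators of the maximal principal right ideals, let 𝒳 = ⟨X⟩ be the wide subcategory generated by X, and suppose the ℛ-condition holds: u, v ∈ 𝒳 and u = vg with g invertible implies u = v and g is an identity. Then 𝒳 with the restriction of λ is a higher rank k-graph (λ restricted to 𝒳 satisfies the unique factorization property), and every element of C has a unique representation as xg with x ∈ 𝒳 and g ∈ G. -/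
open CategoryTheory

universe v u

/-- `Xs` is a transversal of the generators of the maximal principal right ideals:
every member is an atom and every atom is `ℛ`-related to exactly one member. -/
def IsTransversal {C : Type u} [Category.{v} C] (Xs : Set (Arrow C)) : Prop :=
  (∀ f ∈ Xs, IsAtomMor f.hom) ∧
    ∀ ⦃A B : C⦄ (a : A ⟶ B), IsAtomMor a →
      ∃! x : Arrow C, x ∈ Xs ∧ rIdeal a = rIdeal x.hom

/-- The wide subcategory `𝒳 = ⟨Xs⟩` generated by a set of arrows `Xs`. -/
inductive GenX {C : Type u} [Category.{v} C] (Xs : Set (Arrow C)) :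
    ∀ {A B : C}, (A ⟶ B) → Prop
  | id (A : C) : GenX Xs (𝟙 A)
  | of {A B : C} (x : A ⟶ B) : Arrow.mk x ∈ Xs → GenX Xs x
  | comp {A B W : C} (f : A ⟶ B) (g : B ⟶ W) : GenX Xs f → GenX Xs g → GenX Xs (f ≫ g)

/-- The `ℛ`-condition: `u, v ∈ 𝒳` and `u = vg` with `g` invertible implies
`u = v` and `g` is an identity. -/
def RCondition {C : Type u} [Category.{v} C] (Xs : Set (Arrow C)) : Prop :=
  ∀ ⦃A A' B : C⦄ (u : A ⟶ B) (v : A' ⟶ B) (g : A ⟶ A'),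
    GenX Xs u → GenX Xs v → IsIso g → u = g ≫ v →
    A = A' ∧ HEq u v ∧ HEq g (𝟙 A)

section Aux

variable {C : Type u} [Category.{v} C] {k : ℕ}

lemma lam_eq_zero_of_iso (S : SizeFunctor C k) {X Y : C} (f : X ⟶ Y) (h : IsIso f) :
    S.lam f = 0 := (S.zero_iff f).mpr h

lemma GenX.exists_fact (S : SizeFunctor C k) (hW : HasWFP S)
    (Xs : Set (Arrow C)) (hX : IsTransversal Xs) :
    ∀ (N : ℕ) ⦃A B : C⦄ (f : A ⟶ B), (∑ i, S.lam f i) = N →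
      ∃ (M : C) (g : A ⟶ M) (x : M ⟶ B), IsIso g ∧ GenX Xs x ∧ f = g ≫ x := by
  intro N
  induction N using Nat.strong_induction_on with
  | _ N ih =>
    intro A B f hN
    by_cases h0 : S.lam f = 0
    · exact ⟨B, f, 𝟙 B, (S.zero_iff f).mp h0, GenX.id B, (Category.comp_id f).symm⟩
    · -- pick a coordinate i with positive size
      have hex : ∃ i, S.lam f i ≠ 0 := by
        by_contra hc; push_neg at hc; exact h0 (funext hc)
      obtain ⟨i, hi⟩ := hex
      set e : Fin k → ℕ := fun j => if j = i then 1 else 0 with he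
      have hsplit : S.lam f = e + fun j => S.lam f j - e j := by
        funext j
        simp only [he, Pi.add_apply]
        by_cases hji : j = i
        · subst hji; simp; omega
        · simp [hji]
      obtain ⟨W, a₂, a₁, hfa, hl1, hl2, -⟩ := hW f e _ hsplit
      -- a₁ is an atom
      have hatom : IsAtomMor a₁ := by
        constructor
        · intro hiso
          have := lam_eq_zero_of_iso S a₁ hiso
          rw [hl1] at this
          have := congrFun this i
          simp [he] at this
        · intro V c b hab
          have hsum : S.lam c + S.lam b = e := by rw [← hl1, hab, S.map_comp]
          by_cases hbi : S.lam b i = 0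
          · left
            rw [← S.zero_iff]
            funext j
            have := congrFun hsum j
            simp only [he, Pi.add_apply] at this
            simp only [Pi.zero_apply]
            by_cases hji : j = i
            · subst hji; simp at this; omega
            · simp [hji] at this; omega
          · right
            rw [← S.zero_iff]
            funext j
            have := congrFun hsum j
            simp only [he, Pi.add_apply] at this
            simp only [Pi.zero_apply]
            by_cases hji : j = i
            · subst hji; simp at this; omega
            · simp [hji] at this; omega
      obtain ⟨x, ⟨hxX, hideal⟩, -⟩ := hX.2 a₁ hatom
      -- a₁ lies in the right ideal of x.hom
      have hmem : Arrow.mk a₁ ∈ rIdeal x.hom := by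
        rw [← hideal]
        exact ⟨W, 𝟙 W, by simp⟩
      obtain ⟨V, u, hu⟩ := hmem
      have hleft : W = V := congrArg Comma.left hu
      have hright : B = x.right := congrArg Comma.right hu
      have hhom : HEq a₁ (u ≫ x.hom) := by
        have : HEq (Arrow.mk a₁).hom (Arrow.mk (u ≫ x.hom)).hom := by rw [hu]
        exact this
      subst hright
      subst hleft
      have ha1 : a₁ = u ≫ x.hom := eq_of_heq hhom
      -- u is invertible
      have hxatom := hX.1 x hxX
      have hxne : S.lam x.hom ≠ 0 := fun h => hxatom.1 ((S.zero_iff x.hom).mp h) |>.elim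
      have hsum2 : S.lam u + S.lam x.hom = e := by rw [← hl1, ha1, S.map_comp]
      have hu0 : S.lam u = 0 := by
        by_cases hui : S.lam u i = 0
        · funext j
          simp only [Pi.zero_apply]
          have := congrFun hsum2 j
          simp only [he, Pi.add_apply] at this
          by_cases hji : j = i
          · subst hji; exact hui
          · simp [hji] at this; omega
        · exfalso
          apply hxne
          funext j
          simp only [Pi.zero_apply]
          have := congrFun hsum2 j
          simp only [he, Pi.add_apply] at this
          by_cases hji : j = i
          · subst hji; simp at this; omega
          · simp [hji] at this; omega
      have huiso : IsIso u := (S.zero_iff u).mp hu0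
      have hf2 : f = (a₂ ≫ u) ≫ x.hom := by rw [hfa, ha1, Category.assoc]
      have hlam2 : S.lam (a₂ ≫ u) = fun j => S.lam f j - e j := by
        rw [S.map_comp, hu0, hl2]; funext j; simp
      have hlt : (∑ j, S.lam (a₂ ≫ u) j) < N := by
        rw [hlam2, ← hN]
        exact Finset.sum_lt_sum (fun j _ => Nat.sub_le _ _)
          ⟨i, Finset.mem_univ i, by simp only [he]; simp; omega⟩
      obtain ⟨M, g, y, hgiso, hy, hgy⟩ := ih _ hlt (a₂ ≫ u) rfl
      refine ⟨M, g, y ≫ x.hom, hgiso, GenX.comp _ _ hy (GenX.of x.hom hxX), ?_⟩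
      rw [hf2, hgy, Category.assoc]
  

lemma uniq_fact (Xs : Set (Arrow C)) (hR : RCondition Xs) {A B M M' : C}
    (g : A ⟶ M) (x : M ⟶ B) (g' : A ⟶ M') (x' : M' ⟶ B)
    (hg : IsIso g) (hx : GenX Xs x) (hg' : IsIso g') (hx' : GenX Xs x')
    (h : g ≫ x = g' ≫ x') : M' = M ∧ HEq g' g ∧ HEq x' x := by
  haveI := hg; haveI := hg'
  have h2 : x' = (inv g' ≫ g) ≫ x := by
    rw [Category.assoc, h, IsIso.inv_hom_id_assoc]
  obtain ⟨hMM, hxx, hgg⟩ := hR x' x (inv g' ≫ g) hx' hx inferInstance h2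
  subst hMM
  have hone : inv g' ≫ g = 𝟙 M' := eq_of_heq hgg
  have hgg' : g' = g := by
    have := congrArg (fun z => g' ≫ z) hone
    simpa using this.symm
  exact ⟨rfl, heq_of_eq hgg', hxx⟩

end Aux

theorem genX_higher_rank_graph_and_unique_factorization {C : Type u} [Category.{v} C]
    {k : ℕ} (S : SizeFunctor C k) (hW : HasWFP S)
    (Xs : Set (Arrow C)) (hX : IsTransversal Xs) (hR : RCondition Xs) :
    -- `𝒳` with the restriction of `λ` satisfies the unique factorization property
    (∀ ⦃X Y : C⦄ (a : X ⟶ Y), GenX Xs a → ∀ (m n : Fin k → ℕ), S.lam a = m + n →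
      ∃ (W : C) (c : X ⟶ W) (b : W ⟶ Y),
        GenX Xs c ∧ GenX Xs b ∧ a = c ≫ b ∧ S.lam b = m ∧ S.lam c = n ∧
        ∀ ⦃W' : C⦄ (c' : X ⟶ W') (b' : W' ⟶ Y),
          GenX Xs c' → GenX Xs b' → a = c' ≫ b' → S.lam b' = m → S.lam c' = n →
          W' = W ∧ HEq b' b ∧ HEq c' c) ∧
    -- every element of `C` is uniquely of the form `xg` (i.e. `g ≫ x`)
    (∀ ⦃A B : C⦄ (f : A ⟶ B),
      ∃ (M : C) (g : A ⟶ M) (x : M ⟶ B),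
        IsIso g ∧ GenX Xs x ∧ f = g ≫ x ∧
        ∀ ⦃M' : C⦄ (g' : A ⟶ M') (x' : M' ⟶ B),
          IsIso g' → GenX Xs x' → f = g' ≫ x' →
          M' = M ∧ HEq g' g ∧ HEq x' x) := by
  have part2 : ∀ ⦃A B : C⦄ (f : A ⟶ B),
      ∃ (M : C) (g : A ⟶ M) (x : M ⟶ B),
        IsIso g ∧ GenX Xs x ∧ f = g ≫ x ∧
        ∀ ⦃M' : C⦄ (g' : A ⟶ M') (x' : M' ⟶ B),
          IsIso g' → GenX Xs x' → f = g' ≫ x' →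
          M' = M ∧ HEq g' g ∧ HEq x' x := by
    intro A B f
    obtain ⟨M, g, x, hg, hx, hfx⟩ := GenX.exists_fact S hW Xs hX _ f rfl
    refine ⟨M, g, x, hg, hx, hfx, ?_⟩
    intro M' g' x' hg' hx' hfx'
    exact uniq_fact Xs hR g x g' x' hg hx hg' hx' (by rw [← hfx, ← hfx'])
  refine ⟨?_, part2⟩
  intro X Y a ha m n hmn
  obtain ⟨W, a₂, a₁, hfa, hl1, hl2, hu⟩ := hW a m n hmn
  obtain ⟨Wx, g, x, hgiso, hx, hgx⟩ := GenX.exists_fact S hW Xs hX _ a₁ rfl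
  obtain ⟨M, h', y, hhiso, hy, hhy⟩ := GenX.exists_fact S hW Xs hX _ (a₂ ≫ g) rfl
  have ha2 : 𝟙 X ≫ a = h' ≫ (y ≫ x) := by
    rw [Category.id_comp, hfa, hgx, ← Category.assoc, hhy, Category.assoc]
  obtain ⟨hMX, hh1, hyxa⟩ := uniq_fact Xs hR (𝟙 X) a h' (y ≫ x)
    inferInstance ha hhiso (GenX.comp _ _ hy hx) ha2
  subst hMX
  have hayx : a = y ≫ x := (eq_of_heq hyxa).symm
  have hlamx : S.lam x = m := by
    rw [hgx, S.map_comp, lam_eq_zero_of_iso S g hgiso, zero_add] at hl1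
    exact hl1
  have hlamy : S.lam y = n := by
    have h1 : h' = 𝟙 _ := eq_of_heq hh1
    have : S.lam (a₂ ≫ g) = n := by
      rw [S.map_comp, lam_eq_zero_of_iso S g hgiso, add_zero, hl2]
    rw [hhy, h1, Category.id_comp] at this
    exact this
  refine ⟨Wx, y, x, hy, hx, hayx, hlamx, hlamy, ?_⟩
  intro W' c' b' hc' hb' hab' hlb' hlc'
  obtain ⟨g₁, hg₁iso, hb'1, hc'1⟩ := hu c' b' hab' hlb' hlc'
  obtain ⟨g₂, hg₂iso, hx2, hy2⟩ := hu y x hayx hlamx hlamy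
  haveI := hg₁iso; haveI := hg₂iso
  have ha₁ : a₁ = inv g₂ ≫ x := by rw [hx2, IsIso.inv_hom_id_assoc]
  have hb'2 : b' = (g₁ ≫ inv g₂) ≫ x := by rw [hb'1, ha₁, Category.assoc]
  obtain ⟨hWW, hbb, hgg⟩ := hR b' x (g₁ ≫ inv g₂) hb' hx inferInstance hb'2
  subst hWW
  have h12 : g₁ ≫ inv g₂ = 𝟙 _ := eq_of_heq hgg
  have hg12 : g₁ = g₂ := by
    rw [← Category.comp_id g₁, ← IsIso.inv_hom_id g₂, ← Category.assoc, h12, Category.id_comp]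
  have hcy : c' = y := by
    have hcg : c' ≫ g₁ = y ≫ g₁ := by rw [hc'1, hg12, hy2]
    exact (cancel_mono g₁).mp hcg
  exact ⟨rfl, hbb, heq_of_eq hcy⟩
end
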